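/- For a proper subdomain G of R^n, points z1, z2 in G, and parameters p > r ≥ 1, one has b_{G,r}(z1,z2) ≤ b_{G,p}(z1,z2) ≤ 2^{1/r - 1/p} · b_{G,r}(z1,z2). -/

import Mathlib

open Set

lemma nnkey1 (a b : NNReal) {p r : ℝ} (hr : 0 < r) (hrp : r ≤ p) :
    (a ^ p + b ^ p) ^ (1 / p) ≤ (a ^ r + b ^ r) ^ (1 / r) :=
  NNReal.rpow_add_rpow_le a b hr hrp

lemma nnkey2 (a b : NNReal) {p r : ℝ} (hr : 0 < r) (hrp : r < p) :
    (a ^ r + b ^ r) ^ (1 / r) ≤ 2 ^ (1 / r - 1 / p) * (a ^ p + b ^ p) ^ (1 / p) := by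
  have hp : 0 < p := hr.trans hrp
  have h1 : (1 : ℝ) ≤ p / r := (one_le_div hr).2 hrp.le
  have h := NNReal.rpow_add_le_mul_rpow_add_rpow (a ^ r) (b ^ r) h1
  have ha : (a ^ r) ^ (p / r) = a ^ p := by
    rw [← NNReal.rpow_mul]; congr 1; field_simp
  have hb : (b ^ r) ^ (p / r) = b ^ p := by
    rw [← NNReal.rpow_mul]; congr 1; field_simp
  rw [ha, hb] at h
  have h2 := NNReal.rpow_le_rpow h (le_of_lt (by positivity : (0:ℝ) < 1 / p))
  rwa [← NNReal.rpow_mul, NNReal.mul_rpow, ← NNReal.rpow_mul,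
    (show p / r * (1 / p) = 1 / r by field_simp),
    (show (p / r - 1) * (1 / p) = 1 / r - 1 / p by field_simp)] at h2

lemma key1 {a b : ℝ} (ha : 0 ≤ a) (hb : 0 ≤ b) {p r : ℝ} (hr : 0 < r) (hrp : r ≤ p) :
    (a ^ p + b ^ p) ^ (1 / p) ≤ (a ^ r + b ^ r) ^ (1 / r) := by
  lift a to NNReal using ha
  lift b to NNReal using hb
  have := nnkey1 a b hr hrp
  exact_mod_cast this

lemma key2 {a b : ℝ} (ha : 0 ≤ a) (hb : 0 ≤ b) {p r : ℝ} (hr : 0 < r) (hrp : r < p) :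
    (a ^ r + b ^ r) ^ (1 / r) ≤ 2 ^ (1 / r - 1 / p) * (a ^ p + b ^ p) ^ (1 / p) := by
  lift a to NNReal using ha
  lift b to NNReal using hb
  have := nnkey2 a b hr hrp
  exact_mod_cast this

/-- Barrlund distance with parameter `q` in a domain `G`. -/
noncomputable def barrlund {n : ℕ} (G : Set (EuclideanSpace ℝ (Fin n))) (q : ℝ)
    (x y : EuclideanSpace ℝ (Fin n)) : ℝ :=
  sSup ((fun z => dist x y / (dist x z ^ q + dist z y ^ q) ^ (1 / q)) '' frontier G)

theorem stmt1 {n : ℕ} (G : Set (EuclideanSpace ℝ (Fin n)))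
    (hG : IsOpen G) (hGc : IsConnected G) (hGne : G ≠ univ)
    (p r : ℝ) (hr : 1 ≤ r) (hrp : r < p)
    (z1 z2 : EuclideanSpace ℝ (Fin n)) (hz1 : z1 ∈ G) (hz2 : z2 ∈ G) :
    barrlund G r z1 z2 ≤ barrlund G p z1 z2 ∧
      barrlund G p z1 z2 ≤ 2 ^ (1 / r - 1 / p) * barrlund G r z1 z2 := by
  have hr0 : (0 : ℝ) < r := lt_of_lt_of_le one_pos hr
  have hp0 : (0 : ℝ) < p := hr0.trans hrp
  -- frontier is nonempty
  have hSne : (frontier G).Nonempty :=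
    nonempty_frontier_iff.2 ⟨⟨z1, hz1⟩, hGne⟩
  -- distance from z1 to the complement is positive
  have hGc_ne : Gᶜ.Nonempty := by
    rcases (ne_univ_iff_exists_notMem G).1 hGne with ⟨x, hx⟩
    exact ⟨x, hx⟩
  have hδ : 0 < Metric.infDist z1 Gᶜ :=
    ((hG.isClosed_compl.notMem_iff_infDist_pos hGc_ne).1 (by simpa using hz1))
  set δ := Metric.infDist z1 Gᶜ with hδdef
  set D := dist z1 z2 with hD
  have hD0 : 0 ≤ D := dist_nonneg
  -- denominators
  set Np : EuclideanSpace ℝ (Fin n) → ℝ :=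
    fun z => (dist z1 z ^ p + dist z z2 ^ p) ^ (1 / p) with hNp
  set Nr : EuclideanSpace ℝ (Fin n) → ℝ :=
    fun z => (dist z1 z ^ r + dist z z2 ^ r) ^ (1 / r) with hNr
  have hmem : ∀ z ∈ frontier G, δ ≤ dist z1 z := by
    intro z hz
    have hzc : z ∈ Gᶜ := by
      rw [hG.frontier_eq] at hz
      exact hz.2
    exact Metric.infDist_le_dist_of_mem hzc
  have hNlb : ∀ (q : ℝ), 0 < q → ∀ z ∈ frontier G,
      δ ≤ (dist z1 z ^ q + dist z z2 ^ q) ^ (1 / q) := by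
    intro q hq z hz
    have h1 : dist z1 z ^ q ≤ dist z1 z ^ q + dist z z2 ^ q := le_add_of_nonneg_right (by positivity)
    have h2 : (dist z1 z ^ q) ^ (1 / q) ≤ (dist z1 z ^ q + dist z z2 ^ q) ^ (1 / q) :=
      Real.rpow_le_rpow (by positivity) h1 (le_of_lt (one_div_pos.2 hq))
    have h3 : (dist z1 z ^ q) ^ (1 / q) = dist z1 z := by
      rw [one_div, Real.rpow_rpow_inv dist_nonneg hq.ne']
    calc δ ≤ dist z1 z := hmem z hz
      _ = (dist z1 z ^ q) ^ (1 / q) := h3.symm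
      _ ≤ _ := h2
  have hNp_pos : ∀ z ∈ frontier G, 0 < Np z := fun z hz => hδ.trans_le (hNlb p hp0 z hz)
  have hNr_pos : ∀ z ∈ frontier G, 0 < Nr z := fun z hz => hδ.trans_le (hNlb r hr0 z hz)
  -- pointwise inequalities
  have hpt1 : ∀ z ∈ frontier G, D / Nr z ≤ D / Np z := by
    intro z hz
    have h := key1 dist_nonneg dist_nonneg hr0 hrp.le (a := dist z1 z) (b := dist z z2)
    exact div_le_div_of_nonneg_left hD0 (hNp_pos z hz) h
  have hc0 : (0 : ℝ) ≤ 2 ^ (1 / r - 1 / p) := by positivity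
  have hpt2 : ∀ z ∈ frontier G, D / Np z ≤ 2 ^ (1 / r - 1 / p) * (D / Nr z) := by
    intro z hz
    have h := key2 dist_nonneg dist_nonneg hr0 hrp (a := dist z1 z) (b := dist z z2)
    rw [mul_div_assoc', div_le_div_iff₀ (hNp_pos z hz) (hNr_pos z hz)]
    calc D * Nr z ≤ D * (2 ^ (1 / r - 1 / p) * Np z) := mul_le_mul_of_nonneg_left h hD0
      _ = 2 ^ (1 / r - 1 / p) * D * Np z := by ring
  -- bounded above
  have hbddp : BddAbove ((fun z => D / Np z) '' frontier G) := by
    refine ⟨D / δ, ?_⟩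
    rintro x ⟨z, hz, rfl⟩
    exact div_le_div_of_nonneg_left hD0 hδ (hNlb p hp0 z hz)
  have hbddr : BddAbove ((fun z => D / Nr z) '' frontier G) := by
    refine ⟨D / δ, ?_⟩
    rintro x ⟨z, hz, rfl⟩
    exact div_le_div_of_nonneg_left hD0 hδ (hNlb r hr0 z hz)
  constructor
  · apply csSup_le (hSne.image _)
    rintro x ⟨z, hz, rfl⟩
    exact (hpt1 z hz).trans (le_csSup hbddp ⟨z, hz, rfl⟩)
  · apply csSup_le (hSne.image _)
    rintro x ⟨z, hz, rfl⟩
    exact (hpt2 z hz).trans (mul_le_mul_of_nonneg_left (le_csSup hbddr ⟨z, hz, rfl⟩) hc0)
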